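/- arXiv:1408.3356 — 4 statements merged into one kernel-verified Lean document; each statement's English description precedes it below -/
import Mathlib

section
/- Let V be an abelian group, let m and n be natural numbers with n ≤ m, let (0) = F^m ⊆ F^{m-1} ⊆ … ⊆ F^1 ⊆ F^0 = V be a descending filtration of V by subgroups, and let N : V → V be a group endomorphism such that N(F^{i-1}) ⊆ F^i for all i ≥ 1 and ker(N) ∩ N^i(V) = ker(N) ∩ F^i for all i ≥ n. Then N^i(V) = F^i for all i ≥ n. -/
/-!
Since `N` maps `F^i` into `F^{i+1}`, we have `N^i(V) ⊆ F^i` for all `i`, with equality for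
`i ≥ m` where both vanish. Equality then descends from `i + 1` to `i ≥ n`: for `x ∈ F^i`,
`N x ∈ F^{i+1} = N^{i+1}(V)`, so `x` differs from an element of `N^i(V)` by an element of
`ker N ∩ F^i = ker N ∩ N^i(V)`.
-/

theorem AddSubgroup.eq_of_le_of_map_le_map_of_ker_inf_le {G H : Type*} [AddCommGroup G]
    [AddGroup H] (f : G →+ H) {R B : AddSubgroup G} (hRB : R ≤ B)
    (hmap : B.map f ≤ R.map f) (hker : f.ker ⊓ B ≤ R) : R = B := by
  refine le_antisymm hRB ?_
  calc B ≤ (R ⊔ f.ker) ⊓ B := le_inf (AddSubgroup.map_le_map_iff.mp hmap) le_rfl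
    _ = R ⊔ f.ker ⊓ B := sup_inf_assoc_of_le _ hRB
    _ ≤ R := sup_le le_rfl hker

namespace AddMonoid.End

variable {V : Type*} [AddCommGroup V] (N : AddMonoid.End V)

theorem map_range_pow (i : ℕ) :
    ((N ^ i : AddMonoid.End V) : V →+ V).range.map (N : V →+ V)
      = ((N ^ (i + 1) : AddMonoid.End V) : V →+ V).range := by
  rw [pow_succ']
  exact AddMonoidHom.map_range _ _

theorem range_pow_le {F : ℕ → AddSubgroup V} (hF0 : F 0 = ⊤)
    (hN : ∀ i, (F i).map (N : V →+ V) ≤ F (i + 1)) (i : ℕ) :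
    ((N ^ i : AddMonoid.End V) : V →+ V).range ≤ F i := by
  induction i with
  | zero => simp [hF0]
  | succ i ih => exact (map_range_pow N i).symm.le.trans ((AddSubgroup.map_mono ih).trans (hN i))

theorem range_pow_eq_of_range_pow_succ_eq {F : ℕ → AddSubgroup V} {i : ℕ}
    (hle : ((N ^ i : AddMonoid.End V) : V →+ V).range ≤ F i)
    (hN : (F i).map (N : V →+ V) ≤ F (i + 1))
    (hsucc : ((N ^ (i + 1) : AddMonoid.End V) : V →+ V).range = F (i + 1))
    (hker : (N : V →+ V).ker ⊓ ((N ^ i : AddMonoid.End V) : V →+ V).range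
      = (N : V →+ V).ker ⊓ F i) :
    ((N ^ i : AddMonoid.End V) : V →+ V).range = F i :=
  AddSubgroup.eq_of_le_of_map_le_map_of_ker_inf_le N hle
    (by rwa [map_range_pow, hsucc]) (hker ▸ inf_le_right)

end AddMonoid.End

theorem stmt0_general (V : Type*) [AddCommGroup V] (m n : ℕ)
    (F : ℕ → AddSubgroup V)
    (hFtop : F 0 = ⊤)
    (hFbot : ∀ i : ℕ, m ≤ i → F i = ⊥)
    (N : AddMonoid.End V)
    (hshift : ∀ i : ℕ, 1 ≤ i → (F (i - 1)).map (N : V →+ V) ≤ F i)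
    (hker : ∀ i : ℕ, n ≤ i →
      (N : V →+ V).ker ⊓ ((N ^ i : AddMonoid.End V) : V →+ V).range
        = (N : V →+ V).ker ⊓ F i) :
    ∀ i : ℕ, n ≤ i → ((N ^ i : AddMonoid.End V) : V →+ V).range = F i := by
  have hN : ∀ i, (F i).map (N : V →+ V) ≤ F (i + 1) := fun i => hshift (i + 1) i.succ_pos
  have hle := AddMonoid.End.range_pow_le N hFtop hN
  have hbot : ∀ i, m ≤ i → ((N ^ i : AddMonoid.End V) : V →+ V).range = F i := fun i hi =>
    le_antisymm (hle i) (hFbot i hi ▸ bot_le)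
  intro i hi
  rcases le_total m i with hmi | him
  · exact hbot i hmi
  · refine Nat.decreasingInduction' (fun k _ hik hsucc => ?_) him (hbot m le_rfl)
    exact AddMonoid.End.range_pow_eq_of_range_pow_succ_eq N (hle k) (hN k) hsucc
      (hker k (hi.trans hik))

/-- **Lemma 6.1 (filtration lemma).** Let `V` be an abelian group, `m, n ∈ ℕ` with
`n ≤ m`, let `(0) = F^m ⊆ … ⊆ F^1 ⊆ F^0 = V` be a descending filtration of `V` by
subgroups (with `F^i = 0` for `i ≥ m`), and let `N : V → V` be a group endomorphism
with `N(F^{i-1}) ⊆ F^i` for all `i ≥ 1` and `ker(N) ∩ N^i(V) = ker(N) ∩ F^i` for all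
`i ≥ n`.  Then `N^i(V) = F^i` for all `i ≥ n`. -/
theorem stmt0 (V : Type*) [AddCommGroup V] (m n : ℕ) (hnm : n ≤ m)
    (F : ℕ → AddSubgroup V)
    (hdesc : ∀ i : ℕ, F (i + 1) ≤ F i)
    (hFtop : F 0 = ⊤)
    (hFbot : ∀ i : ℕ, m ≤ i → F i = ⊥)
    (N : AddMonoid.End V)
    (hshift : ∀ i : ℕ, 1 ≤ i → (F (i - 1)).map (N : V →+ V) ≤ F i)
    (hker : ∀ i : ℕ, n ≤ i →
      (N : V →+ V).ker ⊓ ((N ^ i : AddMonoid.End V) : V →+ V).range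
        = (N : V →+ V).ker ⊓ F i) :
    ∀ i : ℕ, n ≤ i → ((N ^ i : AddMonoid.End V) : V →+ V).range = F i :=
  stmt0_general V m n F hFtop hFbot N hshift hker
end

section
/- Let K be a field, V a K-vector space, φ : V → V a K-linear endomorphism, m ≥ 1, and let V = F^0 ⊇ F^1 ⊇ … ⊇ F^m = (0) be a descending chain of φ-invariant subspaces. Let P_0, …, P_{m-1} ∈ K[X] be pairwise coprime polynomials such that for each r the operator P_r(φ) maps F^r into F^{r+1} (i.e. P_r(φ) annihilates the quotient F^r/F^{r+1}). Then V is the internal direct sum of the subspaces ker(P_s(φ)) for 0 ≤ s ≤ m-1, and for every r one has F^r = ⨁_{r ≤ s ≤ m-1} ker(P_s(φ)). In particular the filtration (F^r) is uniquely determined by φ and the polynomials P_r. -/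
open Polynomial

section Aux
variable {K : Type*} [Field K] {V : Type*} [AddCommGroup V] [Module K V]
  (φ : Module.End K V)

/-- A φ-invariant submodule is invariant under `aeval φ p`. -/
lemma aux_inv (N : Submodule K V) (hN : N.map φ ≤ N) (p : K[X]) {v : V}
    (hv : v ∈ N) : aeval φ p v ∈ N := by
  have hpow : ∀ (i : ℕ) (x : V), x ∈ N → (φ ^ i) x ∈ N := by
    intro i
    induction i with
    | zero => intro x hx; simpa using hx
    | succ n ih =>
      intro x hx
      rw [pow_succ, Module.End.mul_apply]
      exact ih _ (hN ⟨x, hx, rfl⟩)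
  rw [aeval_eq_sum_range]
  simp only [LinearMap.coe_sum, Finset.sum_apply, LinearMap.smul_apply]
  exact Submodule.sum_mem _ fun i _ => Submodule.smul_mem _ _ (hpow i v hv)

lemma aux_ker_dvd {p q : K[X]} (h : p ∣ q) :
    LinearMap.ker (aeval φ p) ≤ LinearMap.ker (aeval φ q) := by
  obtain ⟨c, rfl⟩ := h
  intro x hx
  rw [LinearMap.mem_ker] at hx ⊢
  rw [mul_comm, map_mul, Module.End.mul_apply, hx, map_zero]

lemma aux_split {a b p q : K[X]} (h : a * p + b * q = 1) (v : V) :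
    v = aeval φ a (aeval φ p v) + aeval φ b (aeval φ q v) := by
  have h2 := congrArg (fun r : K[X] => aeval φ r v) h
  simpa only [map_add, map_mul, LinearMap.add_apply, Module.End.mul_apply,
    map_one, Module.End.one_apply] using h2.symm

lemma aux_coprime_ker {p q : K[X]} (h : IsCoprime p q) {v : V}
    (hp : aeval φ p v = 0) (hq : aeval φ q v = 0) : v = 0 := by
  obtain ⟨a, b, hab⟩ := h
  rw [aux_split φ hab v, hp, hq, map_zero, map_zero, add_zero]

end Aux

/-- Let `K` be a field, `V` a `K`-vector space, `φ : V → V` a `K`-linear endomorphism,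
`m ≥ 1`, and let `V = F^0 ⊇ F^1 ⊇ … ⊇ F^m = (0)` be a descending chain of `φ`-invariant
subspaces.  Let `P_0, …, P_{m-1} ∈ K[X]` be pairwise coprime polynomials such that for
each `r` the operator `P_r(φ)` maps `F^r` into `F^{r+1}`.  Then `V` is the internal
direct sum of the subspaces `ker(P_s(φ))` for `0 ≤ s ≤ m-1`, and for every `r` one has
`F^r = ⨁_{r ≤ s ≤ m-1} ker(P_s(φ))`. -/
theorem stmt1 (K : Type*) [Field K] (V : Type*) [AddCommGroup V] [Module K V]
    (φ : Module.End K V) (m : ℕ) (hm : 1 ≤ m)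
    (F : ℕ → Submodule K V)
    (hdesc : ∀ r : ℕ, F (r + 1) ≤ F r)
    (hF0 : F 0 = ⊤) (hFm : F m = ⊥)
    (hinv : ∀ r : ℕ, (F r).map φ ≤ F r)
    (P : ℕ → K[X])
    (hcop : ∀ r s : ℕ, r < m → s < m → r ≠ s → IsCoprime (P r) (P s))
    (hann : ∀ r : ℕ, r < m → (F r).map (Polynomial.aeval φ (P r)) ≤ F (r + 1)) :
    DirectSum.IsInternal
        (fun s : Fin m => LinearMap.ker (Polynomial.aeval φ (P (s : ℕ)))) ∧
      ∀ r : ℕ, r ≤ m →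
        F r = ⨆ s ∈ Finset.Ico r m, LinearMap.ker (Polynomial.aeval φ (P s)) := by
  set N : ℕ → Submodule K V := fun s => LinearMap.ker (aeval φ (P s)) with hN
  -- Step A : the product of the `P s`, `r ≤ s < t`, maps `F r` into `F t`.
  have stepA : ∀ k r : ℕ, r + k ≤ m → ∀ v ∈ F r,
      aeval φ (∏ s ∈ Finset.Ico r (r + k), P s) v ∈ F (r + k) := by
    intro k
    induction k with
    | zero => intro r _ v hv; simpa using hv
    | succ k ih =>
      intro r hrk v hv
      have h1 : r ≤ r + k := Nat.le_add_right r k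
      rw [← Nat.add_assoc, Finset.prod_Ico_succ_top h1, mul_comm,
        map_mul, Module.End.mul_apply]
      exact hann (r + k) (by omega) ⟨_, ih r (by omega) v hv, rfl⟩
  have stepA' : ∀ r : ℕ, r ≤ m → ∀ v ∈ F r,
      aeval φ (∏ s ∈ Finset.Ico r m, P s) v = 0 := by
    intro r hr v hv
    have := stepA (m - r) r (by omega) v hv
    rw [show r + (m - r) = m by omega] at this
    rwa [hFm, Submodule.mem_bot] at this
  -- Step B : kernels are contained in the filtration.
  have stepB : ∀ r s : ℕ, r ≤ s → s < m → N s ≤ F r := by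
    intro r
    induction r with
    | zero => intro s _ _; rw [hF0]; exact le_top
    | succ r ih =>
      intro s hrs hsm v hv
      have hvr : v ∈ F r := ih s (by omega) hsm hv
      obtain ⟨a, b, hab⟩ := hcop r s (by omega) hsm (by omega)
      have hvs : aeval φ (P s) v = 0 := hv
      rw [aux_split φ hab v, hvs, map_zero, add_zero]
      exact aux_inv φ (F (r + 1)) (hinv (r + 1)) a
        (hann r (by omega) ⟨v, hvr, rfl⟩)
  -- Step C : the filtration equals the sup of the kernels.
  have stepC : ∀ k r : ℕ, r + k = m → F r = ⨆ s ∈ Finset.Ico r m, N s := by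
    intro k
    induction k with
    | zero =>
      intro r hr
      rw [show r = m by omega]
      simp [hFm]
    | succ k ih =>
      intro r hr
      have hrm : r < m := by omega
      have ihr := ih (r + 1) (by omega)
      apply le_antisymm
      · intro v hv
        set Q : K[X] := ∏ s ∈ Finset.Ico (r + 1) m, P s with hQ
        have hcopQ : IsCoprime (P r) Q :=
          IsCoprime.prod_right fun s hs => by
            rw [Finset.mem_Ico] at hs
            exact hcop r s hrm hs.2 (by omega)
        obtain ⟨a, b, hab⟩ := hcopQ
        rw [aux_split φ hab v]
        apply Submodule.add_mem
        · -- first summand lies in `F (r+1)` hence in the sup over `[r+1, m)`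
          have h1 : aeval φ a (aeval φ (P r) v) ∈ F (r + 1) :=
            aux_inv φ (F (r + 1)) (hinv (r + 1)) a (hann r hrm ⟨v, hv, rfl⟩)
          rw [ihr] at h1
          refine (iSup₂_le fun s hs => ?_ :
            (⨆ s ∈ Finset.Ico (r + 1) m, N s) ≤ _) h1
          rw [Finset.mem_Ico] at hs
          exact le_iSup₂ (f := fun s (_ : s ∈ Finset.Ico r m) => N s) s
            (Finset.mem_Ico.2 ⟨by omega, hs.2⟩)
        · -- second summand lies in `N r`
          have h2 : aeval φ b (aeval φ Q v) ∈ N r := by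
            show aeval φ (P r) _ = 0
            have hc : aeval φ (P r) (aeval φ b (aeval φ Q v)) =
                aeval φ b (aeval φ (∏ s ∈ Finset.Ico r m, P s) v) := by
              rw [Finset.prod_eq_prod_Ico_succ_bot hrm, ← hQ]
              simp only [← Module.End.mul_apply, ← map_mul]
              rw [show P r * (b * Q) = b * (P r * Q) by ring]
            rw [hc, stepA' r (by omega) v hv, map_zero]
          exact le_iSup₂ (f := fun s (_ : s ∈ Finset.Ico r m) => N s) r
            (Finset.mem_Ico.2 ⟨le_refl r, hrm⟩) h2
      · exact iSup₂_le fun s hs => by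
          rw [Finset.mem_Ico] at hs
          exact stepB r s hs.1 hs.2
  refine ⟨?_, fun r hr => stepC (m - r) r (by omega)⟩
  rw [DirectSum.isInternal_submodule_iff_iSupIndep_and_iSup_eq_top]
  constructor
  · -- independence
    intro i
    rw [disjoint_iff_inf_le]
    intro v hv
    obtain ⟨hv1, hv2⟩ := hv
    set Q : K[X] := ∏ j ∈ Finset.univ.erase i, P (j : ℕ) with hQ
    have hvQ : aeval φ Q v = 0 := by
      have hle : (⨆ j, ⨆ (_ : j ≠ i), N (j : ℕ)) ≤ LinearMap.ker (aeval φ Q) :=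
        iSup_le fun j => iSup_le fun hj =>
          aux_ker_dvd φ (Finset.dvd_prod_of_mem _ (Finset.mem_erase.2 ⟨hj, Finset.mem_univ j⟩))
      exact hle hv2
    have hcopQ : IsCoprime (P (i : ℕ)) Q :=
      IsCoprime.prod_right fun j hj => by
        refine hcop i j i.2 j.2 fun h => ?_
        exact (Finset.mem_erase.1 hj).1 (Fin.ext h.symm)
    rw [Submodule.mem_bot]
    exact aux_coprime_ker φ hcopQ hv1 hvQ
  · -- supremum is the whole space
    apply le_antisymm le_top
    have h0 := stepC m 0 (by omega)
    rw [hF0] at h0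
    refine le_trans h0.le (iSup₂_le fun s hs => ?_)
    exact by
      rw [Finset.mem_Ico] at hs
      exact le_iSup_of_le ⟨s, hs.2⟩ le_rfl
end

section
/- Let K be a field, V a K-vector space, φ : V → V a K-linear endomorphism, m ≥ 1, and let P_0, …, P_{m-1} ∈ K[X] be pairwise coprime polynomials. Suppose V = F^0 ⊇ F^1 ⊇ … ⊇ F^m = (0) and V = G^0 ⊇ G^1 ⊇ … ⊇ G^m = (0) are two descending chains of φ-invariant subspaces such that for each r the operator P_r(φ) maps F^r into F^{r+1} and maps G^r into G^{r+1}. Then F^r = G^r for all r. -/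
open Polynomial

/-- Invariance of a `φ`-stable submodule under any polynomial in `φ`. -/
lemma aux_inv_s2 {K V : Type*} [Field K] [AddCommGroup V] [Module K V]
    (φ : Module.End K V) (W : Submodule K V) (hW : W.map φ ≤ W)
    (p : K[X]) {x : V} (hx : x ∈ W) : Polynomial.aeval φ p x ∈ W := by
  have hφ : ∀ y ∈ W, φ y ∈ W := fun y hy => hW ⟨y, hy, rfl⟩
  induction p using Polynomial.induction_on' with
  | add p q hp hq => simpa [map_add] using W.add_mem hp hq
  | monomial n c =>
      have hpow : (φ ^ n) x ∈ W := by
        induction n with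
        | zero => simpa using hx
        | succ k ih =>
            rw [pow_succ']
            exact hφ _ ih
      simpa [aeval_monomial, Module.algebraMap_end_apply, Module.End.mul_apply] using
        W.smul_mem c hpow

/-- Iterating the annihilation condition along a chain. -/
lemma aux_chain {K V : Type*} [Field K] [AddCommGroup V] [Module K V]
    (φ : Module.End K V) (m : ℕ) (P : ℕ → K[X]) (F : ℕ → Submodule K V)
    (hFann : ∀ r : ℕ, r < m → (F r).map (Polynomial.aeval φ (P r)) ≤ F (r + 1))
    (a b : ℕ) (hab : a ≤ b) (hbm : b ≤ m) :
    (F a).map (Polynomial.aeval φ (∏ i ∈ Finset.Ico a b, P i)) ≤ F b := by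
  induction b, hab using Nat.le_induction with
  | base => simp [Module.End.one_eq_id, Submodule.map_id]
  | succ b hab ih =>
      rw [Finset.prod_Ico_succ_top hab, mul_comm, map_mul, Module.End.mul_eq_comp,
        Submodule.map_comp]
      exact le_trans (Submodule.map_mono (ih (le_of_lt hbm)))
        (hFann b hbm)

lemma aux_le {K V : Type*} [Field K] [AddCommGroup V] [Module K V]
    (φ : Module.End K V) (m : ℕ)
    (P : ℕ → K[X])
    (hcop : ∀ r s : ℕ, r < m → s < m → r ≠ s → IsCoprime (P r) (P s))
    (F G : ℕ → Submodule K V)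
    (hFdesc : ∀ r : ℕ, F (r + 1) ≤ F r)
    (hFm : F m = ⊥) (hG0 : G 0 = ⊤)
    (hGinv : ∀ r : ℕ, (G r).map φ ≤ G r)
    (hFann : ∀ r : ℕ, r < m → (F r).map (Polynomial.aeval φ (P r)) ≤ F (r + 1))
    (hGann : ∀ r : ℕ, r < m → (G r).map (Polynomial.aeval φ (P r)) ≤ G (r + 1)) :
    ∀ r : ℕ, F r ≤ G r := by
  intro r
  rcases le_or_gt m r with hmr | hrm
  · have hanti : Antitone F := antitone_nat_of_succ_le hFdesc
    calc F r ≤ F m := hanti hmr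
      _ = ⊥ := hFm
      _ ≤ G r := bot_le
  · -- r < m
    have hcp : IsCoprime (∏ i ∈ Finset.Ico 0 r, P i) (∏ i ∈ Finset.Ico r m, P i) := by
      apply IsCoprime.prod_left
      intro i hi
      apply IsCoprime.prod_right
      intro j hj
      simp only [Finset.mem_Ico] at hi hj
      exact hcop i j (lt_trans hi.2 hrm) hj.2 (by omega)
    obtain ⟨a, b, hab⟩ := hcp
    intro x hx
    have hQ : Polynomial.aeval φ (∏ i ∈ Finset.Ico r m, P i) x = 0 := by
      have := aux_chain φ m P F hFann r m (le_of_lt hrm) le_rfl ⟨x, hx, rfl⟩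
      rw [hFm] at this
      simpa using this
    have hR : Polynomial.aeval φ (∏ i ∈ Finset.Ico 0 r, P i) x ∈ G r := by
      refine aux_chain φ m P G hGann 0 r (Nat.zero_le r) (le_of_lt hrm) ⟨x, ?_, rfl⟩
      simp [hG0]
    have hx' : x = Polynomial.aeval φ (a * ∏ i ∈ Finset.Ico 0 r, P i
        + b * ∏ i ∈ Finset.Ico r m, P i) x := by
      rw [hab]; simp
    rw [hx', map_add, LinearMap.add_apply, map_mul, map_mul, Module.End.mul_apply,
      Module.End.mul_apply, hQ, map_zero, add_zero]
    exact aux_inv_s2 φ (G r) (hGinv r) a hR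

/-- Let `K` be a field, `V` a `K`-vector space, `φ : V → V` a `K`-linear endomorphism,
`m ≥ 1`, and `P_0, …, P_{m-1} ∈ K[X]` pairwise coprime polynomials.  If
`V = F^0 ⊇ … ⊇ F^m = (0)` and `V = G^0 ⊇ … ⊇ G^m = (0)` are two descending chains of
`φ`-invariant subspaces such that for each `r` the operator `P_r(φ)` maps `F^r` into
`F^{r+1}` and maps `G^r` into `G^{r+1}`, then `F^r = G^r` for all `r`. -/
theorem stmt2 (K : Type*) [Field K] (V : Type*) [AddCommGroup V] [Module K V]
    (φ : Module.End K V) (m : ℕ) (hm : 1 ≤ m)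
    (P : ℕ → K[X])
    (hcop : ∀ r s : ℕ, r < m → s < m → r ≠ s → IsCoprime (P r) (P s))
    (F G : ℕ → Submodule K V)
    (hFdesc : ∀ r : ℕ, F (r + 1) ≤ F r) (hGdesc : ∀ r : ℕ, G (r + 1) ≤ G r)
    (hF0 : F 0 = ⊤) (hFm : F m = ⊥)
    (hG0 : G 0 = ⊤) (hGm : G m = ⊥)
    (hFinv : ∀ r : ℕ, (F r).map φ ≤ F r) (hGinv : ∀ r : ℕ, (G r).map φ ≤ G r)
    (hFann : ∀ r : ℕ, r < m → (F r).map (Polynomial.aeval φ (P r)) ≤ F (r + 1))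
    (hGann : ∀ r : ℕ, r < m → (G r).map (Polynomial.aeval φ (P r)) ≤ G (r + 1)) :
    ∀ r : ℕ, F r = G r := by
  intro r
  exact le_antisymm
    (aux_le φ m P hcop F G hFdesc hFm hG0 hGinv hFann hGann r)
    (aux_le φ m P hcop G F hGdesc hGm hF0 hFinv hGann hFann r)
end

section
/- Let A be a commutative ring, l ≥ 1, and R = A[X_1, …, X_l]. For a nonempty subset σ ⊆ {1,…,l} let I_σ be the ideal of R generated by {X_s : s ∈ σ}. Consider the complex 0 → R/(X_1⋯X_l) → ⨁_{|σ|=1} R/I_σ → ⨁_{|σ|=2} R/I_σ → … → R/I_{{1,…,l}} → 0, where the first map is induced by the natural quotient maps (which are defined since X_1⋯X_l ∈ I_σ for every nonempty σ), and where the differential from the |σ|=i level to the |σ|=i+1 level sends a family (f_σ)_{|σ|=i} to the family whose component at an (i+1)-element subset τ is Σ_{γ∈τ} (−1)^{pos(γ∈τ)} f̄_{τ∖{γ}}, with f̄_{τ∖{γ}} the image of f_{τ∖{γ}} under the natural projection R/I_{τ∖{γ}} → R/I_τ and pos(γ∈τ) the position of γ in the increasing enumeration of τ. Then this complex is exact in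 every degree. -/
/-- The ideal `I_σ` of `R = A[X_1,…,X_l]` generated by the variables `X_s`, `s ∈ σ`. -/
noncomputable def varIdeal (A : Type*) [CommRing A] (l : ℕ) (σ : Finset (Fin l)) :
    Ideal (MvPolynomial (Fin l) A) :=
  Ideal.span (MvPolynomial.X '' (σ : Set (Fin l)))

theorem varIdeal_mono (A : Type*) [CommRing A] (l : ℕ) {σ τ : Finset (Fin l)}
    (h : σ ⊆ τ) : varIdeal A l σ ≤ varIdeal A l τ :=
  Ideal.span_mono (Set.image_mono (f := MvPolynomial.X) (Finset.coe_subset.2 h))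

/-- `X_1 ⋯ X_l ∈ I_σ` for every nonempty `σ`, so the natural quotient map
`R/(X_1⋯X_l) → R/I_σ` is defined. -/
theorem prod_X_mem_varIdeal (A : Type*) [CommRing A] (l : ℕ)
    {σ : Finset (Fin l)} (hσ : σ.Nonempty) :
    Ideal.span {∏ i : Fin l, MvPolynomial.X i} ≤ varIdeal A l σ := by
  obtain ⟨s, hs⟩ := hσ
  rw [Ideal.span_le, Set.singleton_subset_iff]
  have hX : MvPolynomial.X s ∈ varIdeal A l σ :=
    Ideal.subset_span (Set.mem_image_of_mem _ (Finset.mem_coe.2 hs))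
  rw [← Finset.mul_prod_erase Finset.univ MvPolynomial.X (Finset.mem_univ s)]
  exact Ideal.mul_mem_right _ _ hX

/-- The degree-`i` term `⨁_{|σ|=i} R/I_σ` of the Čech complex. -/
abbrev CechQTerm (A : Type*) [CommRing A] (l : ℕ) (i : ℕ) : Type _ :=
  (σ : {s : Finset (Fin l) // s.card = i}) → MvPolynomial (Fin l) A ⧸ varIdeal A l σ.1

/-- The position `pos(γ ∈ τ)` of `γ` in the increasing enumeration of `τ`. -/
def cechPos {J : Type*} [LinearOrder J] (τ : Finset J) (γ : J) : ℕ :=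
  (τ.filter fun x => x ≤ γ).card

/-- The Čech differential: the component at an `(i+1)`-element subset `τ` of the image
of a family `(f_σ)_{|σ|=i}` is `Σ_{γ∈τ} (−1)^{pos(γ∈τ)} f̄_{τ∖{γ}}`, where `f̄_{τ∖{γ}}`
is the image of `f_{τ∖{γ}}` under the natural projection `R/I_{τ∖{γ}} → R/I_τ`. -/
noncomputable def cechQD (A : Type*) [CommRing A] (l : ℕ) (i : ℕ) (f : CechQTerm A l i) :
    CechQTerm A l (i + 1) :=
  fun τ => ∑ γ ∈ τ.1.attach,
    ((-1 : ℤ) ^ cechPos τ.1 γ.1) •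
      (Ideal.Quotient.factor (S := varIdeal A l (τ.1.erase γ.1)) (T := varIdeal A l τ.1)
          (varIdeal_mono A l (Finset.erase_subset γ.1 τ.1))
        (f ⟨τ.1.erase γ.1, by rw [Finset.card_erase_of_mem γ.2, τ.2]; rfl⟩))

/-- The first map `R/(X_1⋯X_l) → ⨁_{|σ|=1} R/I_σ`, induced by the natural quotient
maps. -/
noncomputable def cechQAug (A : Type*) [CommRing A] (l : ℕ)
    (x : MvPolynomial (Fin l) A ⧸
      (Ideal.span {∏ i : Fin l, MvPolynomial.X i} : Ideal (MvPolynomial (Fin l) A))) :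
    CechQTerm A l 1 :=
  fun σ =>
    Ideal.Quotient.factor
      (prod_X_mem_varIdeal A l (Finset.card_pos.mp (by rw [σ.2]; exact Nat.one_pos))) x

/-!
Reading off the coefficient of a monomial `X^m` splits the complex into its monomial
components. The coefficient of `X^m` is well defined on `R/I_σ` exactly when `σ` avoids the
support of `m`, so the `m`-component is the augmented alternating cochain complex of the full
simplex on the set `Z` of variables missing from `m`. When `Z` is nonempty, coning from a vertex
`v ∈ Z` is a contracting homotopy; choosing `v = min Z` for every `m` makes the homotopy
compatible with the quotient maps. The augmentation is, up to sign, the degree-zero differential,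
and it is injective because a polynomial all of whose monomials involve every variable is
divisible by `X_1⋯X_l`.
-/

open MvPolynomial Finset

section CechCochain

variable {J M : Type*} [LinearOrder J] [AddCommGroup M]

def cechSign (τ : Finset J) (γ : J) : ℤ := (-1) ^ cechPos τ γ

theorem cechSign_mul_self (τ : Finset J) (γ : J) : cechSign τ γ * cechSign τ γ = 1 := by
  rw [cechSign, ← pow_add, ← two_mul, pow_mul, neg_one_sq, one_pow]

theorem cechSign_insert {τ : Finset J} {v : J} (hv : v ∉ τ) (γ : J) :
    cechSign (insert v τ) γ = cechSign τ γ * if v ≤ γ then -1 else 1 := by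
  have hpos : cechPos (insert v τ) γ = cechPos τ γ + if v ≤ γ then 1 else 0 := by
    rw [cechPos, cechPos, filter_insert]
    split_ifs
    · exact card_insert_of_notMem fun h => hv (mem_of_mem_filter _ h)
    · rfl
  rw [cechSign, cechSign, hpos, pow_add]
  split_ifs <;> simp

theorem cechSign_erase {τ : Finset J} {v : J} (hv : v ∈ τ) (γ : J) :
    cechSign (τ.erase v) γ = cechSign τ γ * if v ≤ γ then -1 else 1 := by
  conv_rhs => rw [← insert_erase hv, cechSign_insert (notMem_erase v τ), mul_assoc]
  split_ifs <;> simp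

theorem cechSign_erase_erase {υ : Finset J} {γ δ : J} (hγ : γ ∈ υ) (hδ : δ ∈ υ) (hne : γ ≠ δ) :
    cechSign υ γ * cechSign (υ.erase γ) δ = -(cechSign υ δ * cechSign (υ.erase δ) γ) := by
  rw [cechSign_erase hγ, cechSign_erase hδ]
  rcases hne.lt_or_gt with h | h
  · rw [if_pos h.le, if_neg (not_le.2 h)]; ring
  · rw [if_neg (not_le.2 h), if_pos h.le]; ring

theorem cechSign_erase_insert {τ : Finset J} {γ v : J} (hγ : γ ∈ τ) (hv : v ∉ τ) :
    cechSign τ γ * cechSign (insert v (τ.erase γ)) v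
      = -(cechSign (insert v τ) v * cechSign (insert v τ) γ) := by
  have hvγ : v ≠ γ := fun h => hv (h ▸ hγ)
  have hγ' : γ ∉ insert v (τ.erase γ) := by simp [hvγ.symm]
  have hτ : insert v τ = insert γ (insert v (τ.erase γ)) := by
    rw [Finset.insert_comm, insert_erase hγ]
  rw [cechSign_insert hv γ, hτ, cechSign_insert hγ' v]
  rcases hvγ.lt_or_gt with h | h
  · rw [if_pos h.le, if_neg (not_le.2 h)]; ring
  · rw [if_neg (not_le.2 h), if_pos h.le]; ring

def cechDiff (g : Finset J → M) (τ : Finset J) : M :=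
  ∑ γ ∈ τ, cechSign τ γ • g (τ.erase γ)

def cechCone (v : J) (g : Finset J → M) (σ : Finset J) : M :=
  if v ∈ σ then 0 else cechSign (insert v σ) v • g (insert v σ)

theorem map_cechDiff {N : Type*} [AddCommGroup N] (φ : M →+ N) (g : Finset J → M)
    (τ : Finset J) : φ (cechDiff g τ) = cechDiff (φ ∘ g) τ := by
  simp only [cechDiff, map_sum, map_zsmul, Function.comp_apply]

theorem map_cechCone {N : Type*} [AddCommGroup N] (φ : M →+ N) (v : J) (g : Finset J → M)
    (σ : Finset J) : φ (cechCone v g σ) = cechCone v (φ ∘ g) σ := by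
  unfold cechCone
  split_ifs <;> simp

theorem cechDiff_congr {S : Finset J} {g g' : Finset J → M} (h : ∀ σ ⊆ S, g σ = g' σ)
    {τ : Finset J} (hτ : τ ⊆ S) : cechDiff g τ = cechDiff g' τ :=
  sum_congr rfl fun γ _ => by rw [h _ ((erase_subset γ τ).trans hτ)]

theorem cechCone_congr {S : Finset J} {g g' : Finset J → M} (h : ∀ σ ⊆ S, g σ = g' σ)
    {v : J} (hv : v ∈ S) {σ : Finset J} (hσ : σ ⊆ S) : cechCone v g σ = cechCone v g' σ := by
  rw [cechCone, cechCone, h _ (insert_subset hv hσ)]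

theorem cechDiff_eq_zero_of_card_ne {g : Finset J → M} {i : ℕ}
    (hg : ∀ σ : Finset J, σ.card ≠ i → g σ = 0) {τ : Finset J} (hτ : τ.card ≠ i + 1) :
    cechDiff g τ = 0 :=
  sum_eq_zero fun γ hγ => by
    have := card_pos.2 ⟨γ, hγ⟩
    rw [hg _ (by rw [card_erase_of_mem hγ]; omega), smul_zero]

theorem cechCone_eq_zero_of_card_ne {g : Finset J → M} {i : ℕ}
    (hg : ∀ σ : Finset J, σ.card ≠ i + 1 → g σ = 0) (v : J) {σ : Finset J} (hσ : σ.card ≠ i) :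
    cechCone v g σ = 0 := by
  unfold cechCone
  split_ifs with hv
  · rfl
  · rw [hg _ (by rw [card_insert_of_notMem hv]; omega), smul_zero]

theorem cechDiff_cechDiff (g : Finset J → M) : cechDiff (cechDiff g) = 0 := by
  funext υ
  simp only [cechDiff, smul_sum, smul_smul]
  rw [sum_sigma']
  refine sum_involution (fun p _ => ⟨p.2, p.1⟩) ?_ ?_ ?_ (fun _ _ => rfl)
  · rintro ⟨γ, δ⟩ hp
    obtain ⟨hγ, hδ⟩ := mem_sigma.1 hp
    rw [cechSign_erase_erase hγ (mem_of_mem_erase hδ) (ne_of_mem_erase hδ).symm,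
      erase_right_comm, neg_smul, neg_add_cancel]
  · rintro ⟨γ, δ⟩ hp _ heq
    exact ne_of_mem_erase (mem_sigma.1 hp).2 (Sigma.mk.inj_iff.1 heq).1
  · rintro ⟨γ, δ⟩ hp
    obtain ⟨hγ, hδ⟩ := mem_sigma.1 hp
    exact mem_sigma.2 ⟨mem_of_mem_erase hδ, mem_erase.2 ⟨(ne_of_mem_erase hδ).symm, hγ⟩⟩

theorem cechDiff_cechCone_add_cechCone_cechDiff (v : J) (g : Finset J → M) (τ : Finset J) :
    cechDiff (cechCone v g) τ + cechCone v (cechDiff g) τ = g τ := by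
  by_cases hv : v ∈ τ
  · rw [cechCone, if_pos hv, add_zero, cechDiff, sum_eq_single_of_mem v hv]
    · rw [cechCone, if_neg (notMem_erase v τ), insert_erase hv, smul_smul,
        cechSign_mul_self, one_smul]
    · intro γ _ hγv
      rw [cechCone, if_pos (mem_erase.2 ⟨hγv.symm, hv⟩), smul_zero]
  · have hcone : ∀ γ ∈ τ, cechSign τ γ • cechCone v g (τ.erase γ)
        = -((cechSign (insert v τ) v * cechSign (insert v τ) γ) •
            g ((insert v τ).erase γ)) := fun γ hγ => by
      have hvγ : v ≠ γ := fun h => hv (h ▸ hγ)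
      rw [cechCone, if_neg fun h => hv (mem_of_mem_erase h), smul_smul,
        cechSign_erase_insert hγ hv, neg_smul, erase_insert_of_ne hvγ]
    rw [cechDiff, sum_congr rfl hcone, sum_neg_distrib, cechCone, if_neg hv, cechDiff,
      sum_insert hv, erase_insert hv, smul_add, smul_smul, cechSign_mul_self, one_smul,
      smul_sum]
    simp only [smul_smul]
    abel

end CechCochain

theorem mem_span_prod_X_iff {ι R : Type*} [Fintype ι] [CommSemiring R] {p : MvPolynomial ι R} :
    p ∈ Ideal.span {∏ i, X i} ↔ ∀ m ∈ p.support, ∀ i, m i ≠ 0 := by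
  have hprod : ∏ i, (X i : MvPolynomial ι R) = monomial (∑ i, Finsupp.single i 1) 1 :=
    (monomial_sum_one univ _).symm
  rw [hprod, ← Set.image_singleton (f := fun s => monomial s (1 : R)),
    mem_ideal_span_monomial_image]
  simp [Finsupp.le_def, Nat.one_le_iff_ne_zero]

noncomputable def restrictMonomials {ι R : Type*} [CommSemiring R] (P : (ι →₀ ℕ) → Prop)
    [DecidablePred P] (p : MvPolynomial ι R) : MvPolynomial ι R :=
  ∑ m ∈ p.support with P m, monomial m (coeff m p)

theorem coeff_restrictMonomials {ι R : Type*} [CommSemiring R] (P : (ι →₀ ℕ) → Prop)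
    [DecidablePred P] (p : MvPolynomial ι R) (m : ι →₀ ℕ) :
    coeff m (restrictMonomials P p) = if P m then coeff m p else 0 := by
  classical
  simp only [restrictMonomials, coeff_sum, coeff_monomial, sum_ite_eq', mem_filter,
    mem_support_iff]
  split_ifs <;> tauto

section VarIdealCochain

variable {A : Type*} [CommRing A] {l : ℕ}

theorem mk_varIdeal_eq_mk_iff {σ : Finset (Fin l)} {p q : MvPolynomial (Fin l) A} :
    Ideal.Quotient.mk (varIdeal A l σ) p = Ideal.Quotient.mk _ q ↔
      ∀ m : Fin l →₀ ℕ, σ ⊆ m.supportᶜ → coeff m p = coeff m q := by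
  rw [Ideal.Quotient.eq, varIdeal, mem_ideal_span_X_image]
  constructor
  · intro h m hm
    by_contra hne
    obtain ⟨s, hs, hms⟩ := h m (mem_support_iff.2 (by rwa [coeff_sub, sub_ne_zero]))
    exact mem_compl.1 (hm hs) (Finsupp.mem_support_iff.2 hms)
  · intro h m hm
    by_contra hc
    have hmσ : σ ⊆ m.supportᶜ := fun s hs =>
      mem_compl.2 fun hms => hc ⟨s, hs, Finsupp.mem_support_iff.1 hms⟩
    exact mem_support_iff.1 hm (by rw [coeff_sub, h m hmσ, sub_self])

variable {i : ℕ}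

noncomputable def cochainLift (F : CechQTerm A l i) (τ : Finset (Fin l)) :
    MvPolynomial (Fin l) A :=
  if h : τ.card = i then Quotient.out (F ⟨τ, h⟩) else 0

theorem mk_cochainLift (F : CechQTerm A l i) {τ : Finset (Fin l)} (h : τ.card = i) :
    Ideal.Quotient.mk (varIdeal A l τ) (cochainLift F τ) = F ⟨τ, h⟩ := by
  rw [cochainLift, dif_pos h]
  exact Quotient.out_eq _

/-- Independent of the chosen lifts only when `τ ⊆ m.supportᶜ`, i.e. `X^m ∉ I_τ`. -/
noncomputable def cochainCoeff (F : CechQTerm A l i) (m : Fin l →₀ ℕ) (τ : Finset (Fin l)) : A :=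
  coeff m (cochainLift F τ)

theorem cochainCoeff_of_card_ne (F : CechQTerm A l i) (m : Fin l →₀ ℕ) {τ : Finset (Fin l)}
    (h : τ.card ≠ i) : cochainCoeff F m τ = 0 := by
  rw [cochainCoeff, cochainLift, dif_neg h, coeff_zero]

theorem cochainCoeff_eq_coeff {F : CechQTerm A l i} {τ : Finset (Fin l)} (hτ : τ.card = i)
    {m : Fin l →₀ ℕ} (hm : τ ⊆ m.supportᶜ) {p : MvPolynomial (Fin l) A}
    (hp : F ⟨τ, hτ⟩ = Ideal.Quotient.mk _ p) : cochainCoeff F m τ = coeff m p :=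
  mk_varIdeal_eq_mk_iff.1 ((mk_cochainLift F hτ).trans hp) m hm

theorem cochainCoeff_zero (m : Fin l →₀ ℕ) {τ : Finset (Fin l)} (hm : τ ⊆ m.supportᶜ) :
    cochainCoeff (0 : CechQTerm A l i) m τ = 0 := by
  by_cases hτ : τ.card = i
  · rw [cochainCoeff_eq_coeff hτ hm (map_zero _).symm, coeff_zero]
  · exact cochainCoeff_of_card_ne 0 m hτ

theorem cochain_ext {F G : CechQTerm A l i}
    (h : ∀ m τ, τ.card = i → τ ⊆ m.supportᶜ → cochainCoeff F m τ = cochainCoeff G m τ) :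
    F = G := by
  funext ⟨τ, hτ⟩
  rw [← mk_cochainLift F hτ, ← mk_cochainLift G hτ, mk_varIdeal_eq_mk_iff]
  exact fun m hm => h m τ hτ hm

theorem cechQD_apply (F : CechQTerm A l i) (τ : {s : Finset (Fin l) // s.card = i + 1}) :
    cechQD A l i F τ = Ideal.Quotient.mk _ (cechDiff (cochainLift F) τ.1) := by
  rw [cechQD, cechDiff, map_sum]
  refine Eq.trans ?_ (sum_attach τ.1 _)
  refine sum_congr rfl fun γ _ => ?_
  rw [map_zsmul, ← mk_cochainLift F, Ideal.Quotient.factor_mk, cechSign]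

theorem cochainCoeff_cechQD (F : CechQTerm A l i) {m : Fin l →₀ ℕ} {τ : Finset (Fin l)}
    (hm : τ ⊆ m.supportᶜ) :
    cochainCoeff (cechQD A l i F) m τ = cechDiff (cochainCoeff F m) τ := by
  by_cases hτ : τ.card = i + 1
  · rw [cochainCoeff_eq_coeff hτ hm (cechQD_apply F _), ← coeffAddMonoidHom_apply,
      map_cechDiff]
    rfl
  · rw [cochainCoeff_of_card_ne _ m hτ,
      cechDiff_eq_zero_of_card_ne (fun σ hσ => cochainCoeff_of_card_ne F m hσ) hτ]

theorem cechQD_cechQD (F : CechQTerm A l i) : cechQD A l (i + 1) (cechQD A l i F) = 0 :=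
  cochain_ext fun m τ _ hm => by
    rw [cochainCoeff_cechQD _ hm, cechDiff_congr (fun σ hσ => cochainCoeff_cechQD F hσ) hm,
      cechDiff_cechDiff, cochainCoeff_zero m hm]
    rfl

noncomputable def homotopyLift (F : CechQTerm A l (i + 1)) (σ : Finset (Fin l)) :
    MvPolynomial (Fin l) A :=
  ∑ v : Fin l, restrictMonomials (fun m => m.supportᶜ.min = v) (cechCone v (cochainLift F) σ)

theorem coeff_homotopyLift (F : CechQTerm A l (i + 1)) (σ : Finset (Fin l))
    {m : Fin l →₀ ℕ} {v : Fin l} (hv : m.supportᶜ.min = v) :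
    coeff m (homotopyLift F σ) = cechCone v (cochainCoeff F m) σ := by
  rw [homotopyLift, coeff_sum, sum_eq_single v]
  · rw [coeff_restrictMonomials, if_pos hv, ← coeffAddMonoidHom_apply, map_cechCone]
    rfl
  · intro w _ hw
    rw [coeff_restrictMonomials, if_neg fun h => hw (WithTop.coe_injective (h.symm.trans hv))]
  · exact fun h => absurd (mem_univ v) h

noncomputable def cechHomotopy (F : CechQTerm A l (i + 1)) : CechQTerm A l i :=
  fun σ => Ideal.Quotient.mk _ (homotopyLift F σ.1)

theorem cochainCoeff_cechHomotopy (F : CechQTerm A l (i + 1)) {m : Fin l →₀ ℕ} {v : Fin l}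
    (hv : m.supportᶜ.min = v) {σ : Finset (Fin l)} (hσ : σ ⊆ m.supportᶜ) :
    cochainCoeff (cechHomotopy F) m σ = cechCone v (cochainCoeff F m) σ := by
  by_cases h : σ.card = i
  · rw [cochainCoeff_eq_coeff h hσ rfl, coeff_homotopyLift F σ hv]
  · rw [cochainCoeff_of_card_ne _ m h,
      cechCone_eq_zero_of_card_ne (fun τ hτ => cochainCoeff_of_card_ne F m hτ) v h]

theorem cechQD_cechHomotopy {F : CechQTerm A l (i + 1)} (hF : cechQD A l (i + 1) F = 0) :
    cechQD A l i (cechHomotopy F) = F :=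
  cochain_ext fun m τ hτ hm => by
    have hS : (m.supportᶜ).Nonempty := (card_pos.1 (by omega)).mono hm
    have hv : m.supportᶜ.min = (m.supportᶜ.min' hS : Fin l) := (coe_min' hS).symm
    have hcocycle :
        ∀ σ ⊆ m.supportᶜ, cechDiff (cochainCoeff F m) σ = (0 : Finset (Fin l) → A) σ :=
      fun σ hσ => by rw [← cochainCoeff_cechQD F hσ, hF, cochainCoeff_zero m hσ]; rfl
    have hcone := cechDiff_cechCone_add_cechCone_cechDiff (m.supportᶜ.min' hS)
      (cochainCoeff F m) τ
    rw [cechCone_congr hcocycle (min'_mem _ hS) hm, cechCone, Pi.zero_apply, smul_zero, ite_self,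
      add_zero] at hcone
    rw [cochainCoeff_cechQD _ hm,
      cechDiff_congr (fun σ hσ => cochainCoeff_cechHomotopy F hv hσ) hm, hcone]

theorem cechQAug_mk_eq_cechQD {p : MvPolynomial (Fin l) A} {G : CechQTerm A l 0}
    (hG : G ⟨∅, card_empty⟩ = Ideal.Quotient.mk _ (-p)) :
    cechQAug A l (Ideal.Quotient.mk _ p) = cechQD A l 0 G :=
  cochain_ext fun m τ hτ hm => by
    obtain ⟨t, rfl⟩ := card_eq_one.1 hτ
    rw [cochainCoeff_eq_coeff hτ hm (Ideal.Quotient.factor_mk _ _), cochainCoeff_cechQD _ hm,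
      cechDiff, sum_singleton, erase_singleton,
      cochainCoeff_eq_coeff card_empty (empty_subset _) hG, coeff_neg]
    simp [cechSign, cechPos, filter_singleton]

theorem cechQAug_injective : Function.Injective (cechQAug A l) := by
  intro x y h
  obtain ⟨p, rfl⟩ := Ideal.Quotient.mk_surjective x
  obtain ⟨q, rfl⟩ := Ideal.Quotient.mk_surjective y
  rw [Ideal.Quotient.eq, mem_span_prod_X_iff]
  intro m hm t hmt
  have ht := congrFun h ⟨{t}, card_singleton t⟩
  simp only [cechQAug, Ideal.Quotient.factor_mk, mk_varIdeal_eq_mk_iff] at ht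
  exact mem_support_iff.1 hm (by rw [coeff_sub, ht m (by simpa using hmt), sub_self])

end VarIdealCochain

theorem stmt7_general (A : Type*) [CommRing A] (l : ℕ) :
    Function.Injective (cechQAug A l) ∧
    (∀ x, cechQD A l 1 (cechQAug A l x) = 0) ∧
    (∀ i : ℕ, 1 ≤ i → ∀ f : CechQTerm A l i, cechQD A l (i + 1) (cechQD A l i f) = 0) ∧
    (∀ f : CechQTerm A l 1, cechQD A l 1 f = 0 → ∃ x, cechQAug A l x = f) ∧
    (∀ i : ℕ, 1 ≤ i → ∀ f : CechQTerm A l (i + 1),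
      cechQD A l (i + 1) f = 0 → ∃ g : CechQTerm A l i, cechQD A l i g = f) := by
  refine ⟨cechQAug_injective, fun x => ?_, fun i _ f => cechQD_cechQD f, fun f hf => ?_,
    fun i _ f hf => ⟨cechHomotopy f, cechQD_cechHomotopy hf⟩⟩
  · obtain ⟨p, rfl⟩ := Ideal.Quotient.mk_surjective x
    rw [cechQAug_mk_eq_cechQD (G := fun _ => Ideal.Quotient.mk _ (-p)) rfl, cechQD_cechQD]
  · exact ⟨Ideal.Quotient.mk _ (-homotopyLift f ∅),
      (cechQAug_mk_eq_cechQD (by rw [neg_neg]; rfl)).trans (cechQD_cechHomotopy hf)⟩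

/-- Let `A` be a commutative ring, `l ≥ 1`, `R = A[X_1,…,X_l]`, and for a nonempty
`σ ⊆ {1,…,l}` let `I_σ = (X_s : s ∈ σ)`.  Then the Čech complex
`0 → R/(X_1⋯X_l) → ⨁_{|σ|=1} R/I_σ → ⨁_{|σ|=2} R/I_σ → … → R/I_{{1,…,l}} → 0`
(with the signed differentials `cechQD` and the augmentation `cechQAug`) is exact in
every degree. -/
theorem stmt7 (A : Type*) [CommRing A] (l : ℕ) (hl : 1 ≤ l) :
    Function.Injective (cechQAug A l) ∧
    (∀ x, cechQD A l 1 (cechQAug A l x) = 0) ∧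
    (∀ i : ℕ, 1 ≤ i → ∀ f : CechQTerm A l i, cechQD A l (i + 1) (cechQD A l i f) = 0) ∧
    (∀ f : CechQTerm A l 1, cechQD A l 1 f = 0 → ∃ x, cechQAug A l x = f) ∧
    (∀ i : ℕ, 1 ≤ i → ∀ f : CechQTerm A l (i + 1),
      cechQD A l (i + 1) f = 0 → ∃ g : CechQTerm A l i, cechQD A l i g = f) :=
  stmt7_general A l
end
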